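/- Let p ≥ 3 be prime, let r with 1 ≤ r ≤ p-1 be a quadratic nonresidue modulo p, and set R = r if r is odd and R = p + r if r is even. Then for all integers n ≥ 0 and k ≥ 0, b_{2k+1}(2pn + R) ≡ 0 (mod 4), where b_m denotes the overcubic partition m-tuples function. -/

import Mathlib

open PowerSeries

/-- Truncated version of `fₖ = ∏_{i≥1} (1 - q^{k i})`: the product over `1 ≤ i ≤ N`,
which has the same coefficients as the infinite product in degrees `≤ N`. -/
noncomputable def fTrunc (k N : ℕ) : PowerSeries ℤ :=
  ∏ i ∈ Finset.Icc 1 N, (1 - (PowerSeries.X : PowerSeries ℤ) ^ (k * i))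

/-- `b m n` is the `n`-th coefficient of `f₄ᵐ / (f₁^{2m} f₂ᵐ)`, the number of
overcubic partition `m`-tuples of `n`. -/
noncomputable def b (m n : ℕ) : ℤ :=
  PowerSeries.coeff (R := ℤ) n
    ((fTrunc 4 n) ^ m * PowerSeries.invOfUnit ((fTrunc 1 n) ^ (2 * m) * (fTrunc 2 n) ^ m) 1)

/-!
Since `(1 - x)² = (1 - x²) + 2(x² - x)`, modulo 4 we have `f₁⁴ ≡ f₂²` and `f₂⁴ ≡ f₄²`, so for odd
`m` the series `f₄ᵐ / (f₁^{2m} f₂ᵐ)` is congruent to `f₄ / (f₁² f₂)`. Factor by factor,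
`(1 - x)² (1 - x²) (1 + 2x / (1 - x²)) ≡ 1 - x⁴`, hence
`f₄ / (f₁² f₂) ≡ 1 + 2 ∑_{i ≥ 1} qⁱ / (1 - q²ⁱ)`. The coefficient of `q^N` in the sum counts the
divisors `i` of `N` with `N / i` odd, which for odd `N` are all divisors; their number is even
unless `N` is a square. Finally `2pn + R` is odd and congruent to the nonresidue `r` modulo `p`.
-/

open Finset

theorem Nat.even_card_divisors_of_not_isSquare {n : ℕ} (hn : ¬IsSquare n) :
    Even #n.divisors := by
  rw [← ZMod.natCast_eq_zero_iff_even, card_eq_sum_ones, Nat.cast_sum, Nat.cast_one]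
  refine sum_involution (fun d _ => n / d) (fun _ _ => by decide) (fun d hd _ hdd => hn ?_)
    (fun d hd => Nat.mem_divisors.2 ⟨Nat.div_dvd_of_dvd (Nat.dvd_of_mem_divisors hd),
      (Nat.mem_divisors.1 hd).2⟩)
    (fun d hd => Nat.div_div_self (Nat.dvd_of_mem_divisors hd) (Nat.mem_divisors.1 hd).2)
  exact ⟨d, (Nat.mul_div_cancel' (Nat.dvd_of_mem_divisors hd)).symm.trans (by rw [hdd])⟩

theorem Nat.two_mul_dvd_sub_self_iff {n i : ℕ} (hn : Odd n) (hi : i ≤ n) :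
    2 * i ∣ n - i ↔ i ∣ n := by
  refine ⟨fun h => (Nat.dvd_sub_iff_left hi dvd_rfl).1 (dvd_of_mul_left_dvd h), ?_⟩
  rintro ⟨c, rfl⟩
  obtain ⟨d, rfl⟩ := (Nat.odd_mul.1 hn).2
  exact ⟨d, by rw [mul_add, mul_one, Nat.add_sub_cancel]; ring⟩

theorem Nat.filter_two_mul_dvd_sub_self_eq_divisors {n : ℕ} (hn : Odd n) :
    {i ∈ Icc 1 n | 2 * i ∣ n - i} = n.divisors := by
  ext i
  simp only [mem_filter, mem_Icc, Nat.mem_divisors]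
  constructor
  · rintro ⟨⟨-, hin⟩, h⟩
    exact ⟨(Nat.two_mul_dvd_sub_self_iff hn hin).1 h, hn.pos.ne'⟩
  · rintro ⟨h, -⟩
    have hin := Nat.le_of_dvd hn.pos h
    exact ⟨⟨Nat.pos_of_dvd_of_pos h hn.pos, hin⟩, (Nat.two_mul_dvd_sub_self_iff hn hin).2 h⟩

section FourEqZero

variable {A ι : Type*} [CommRing A]

theorem one_sub_pow_four_of_four_eq_zero (h4 : (4 : A) = 0) (x : A) :
    (1 - x) ^ 4 = (1 - x ^ 2) ^ 2 := by
  linear_combination (-x + 2 * x ^ 2 - x ^ 3) * h4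

theorem one_sub_sq_mul_one_sub_sq_mul_one_add_two_mul (h4 : (4 : A) = 0) {x g : A}
    (hg : (1 - x ^ 2) * g = 1) :
    (1 - x) ^ 2 * (1 - x ^ 2) * (1 + 2 * (x * g)) = 1 - x ^ 4 := by
  linear_combination (2 * x * (1 + x ^ 2)) * hg + (x ^ 3 - x ^ 2 * (1 - x ^ 2) * g) * h4

theorem prod_one_add_two_mul_of_four_eq_zero (h4 : (4 : A) = 0) (s : Finset ι) (y : ι → A) :
    ∏ i ∈ s, (1 + 2 * y i) = 1 + 2 * ∑ i ∈ s, y i := by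
  classical
  induction s using Finset.induction with
  | empty => simp
  | insert a s ha ih =>
    rw [prod_insert ha, sum_insert ha, ih]
    linear_combination y a * (∑ i ∈ s, y i) * h4

theorem prod_one_sub_pow_four_of_four_eq_zero (h4 : (4 : A) = 0) (s : Finset ι) (x : ι → A) :
    (∏ i ∈ s, (1 - x i)) ^ 4 = (∏ i ∈ s, (1 - x i ^ 2)) ^ 2 := by
  simp only [← prod_pow, one_sub_pow_four_of_four_eq_zero h4]

theorem prod_one_sub_sq_mul_prod_one_sub_sq_mul_one_add_two_mul_sum (h4 : (4 : A) = 0)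
    (s : Finset ι) {x g : ι → A} (hg : ∀ i ∈ s, (1 - x i ^ 2) * g i = 1) :
    (∏ i ∈ s, (1 - x i)) ^ 2 * (∏ i ∈ s, (1 - x i ^ 2)) * (1 + 2 * ∑ i ∈ s, x i * g i) =
      ∏ i ∈ s, (1 - x i ^ 4) := by
  rw [← prod_one_add_two_mul_of_four_eq_zero h4, ← prod_pow, ← prod_mul_distrib,
    ← prod_mul_distrib]
  exact prod_congr rfl fun i hi => one_sub_sq_mul_one_sub_sq_mul_one_add_two_mul h4 (hg i hi)

end FourEqZero

theorem pow_mul_pow_mul_eq_pow_odd {A : Type*} [CommMonoid A] {a b c e : A}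
    (hab : a ^ 4 = b ^ 2) (hbc : b ^ 4 = c ^ 2) (he : a ^ 2 * b * e = c) (k : ℕ) :
    a ^ (2 * (2 * k + 1)) * b ^ (2 * k + 1) * e = c ^ (2 * k + 1) := by
  calc a ^ (2 * (2 * k + 1)) * b ^ (2 * k + 1) * e
      = (a ^ 4) ^ k * (b ^ 2) ^ k * (a ^ 2 * b * e) := by
        rw [← pow_mul, ← pow_mul, show 2 * (2 * k + 1) = 4 * k + 2 by ring, pow_add, pow_succ b]
        ac_rfl
    _ = (b ^ 4) ^ k * c := by rw [hab, he, ← mul_pow, ← pow_add]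
    _ = c ^ (2 * k + 1) := by rw [hbc, ← pow_mul, pow_succ]

namespace PowerSeries

variable (R : Type*) [Ring R]

noncomputable def invOneSubXPow (k : ℕ) : R⟦X⟧ :=
  mk fun n => if k ∣ n then 1 else 0

variable {R}

theorem coeff_invOneSubXPow (k n : ℕ) :
    coeff n (invOneSubXPow R k) = if k ∣ n then 1 else 0 :=
  coeff_mk n _

theorem one_sub_X_pow_mul_invOneSubXPow {k : ℕ} (hk : k ≠ 0) :
    (1 - X ^ k) * invOneSubXPow R k = 1 := by
  ext n
  rw [sub_mul, one_mul, map_sub, coeff_X_pow_mul', coeff_one, coeff_invOneSubXPow]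
  rcases eq_or_ne n 0 with rfl | hn
  · simp [hk]
  by_cases hkn : k ≤ n
  · have hnk : n ≤ k → k ∣ n := fun h => le_antisymm hkn h ▸ dvd_rfl
    simp [hn, hkn, coeff_invOneSubXPow, Nat.dvd_sub_self_right, or_iff_left_of_imp hnk]
  · simp [hn, hkn, mt (Nat.le_of_dvd (Nat.pos_of_ne_zero hn))]

theorem coeff_X_pow_mul_invOneSubXPow {i k n : ℕ} (hi : i ≤ n) :
    coeff n (X ^ i * invOneSubXPow R k) = if k ∣ n - i then 1 else 0 := by
  rw [coeff_X_pow_mul', if_pos hi, coeff_invOneSubXPow]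

end PowerSeries

theorem map_fTrunc {R : Type*} [CommRing R] (k N : ℕ) :
    map (Int.castRingHom R) (fTrunc k N) = ∏ i ∈ Icc 1 N, (1 - (X ^ i) ^ k) := by
  simp only [fTrunc, map_prod, map_sub, map_one, map_pow, map_X, ← pow_mul, mul_comm k]

theorem constantCoeff_fTrunc {k : ℕ} (hk : k ≠ 0) (N : ℕ) : constantCoeff (fTrunc k N) = 1 := by
  refine (map_prod _ _ _).trans (prod_eq_one fun i hi => ?_)
  have : k * i ≠ 0 := mul_ne_zero hk (Nat.one_le_iff_ne_zero.1 (mem_Icc.1 hi).1)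
  simp [this]

theorem map_fTrunc_pow_mul_one_add_two_mul_sum (k N : ℕ) :
    map (Int.castRingHom (ZMod 4)) (fTrunc 1 N ^ (2 * (2 * k + 1)) * fTrunc 2 N ^ (2 * k + 1)) *
        (1 + 2 * ∑ i ∈ Icc 1 N, X ^ i * invOneSubXPow (ZMod 4) (2 * i)) =
      map (Int.castRingHom (ZMod 4)) (fTrunc 4 N) ^ (2 * k + 1) := by
  have h4 : (4 : (ZMod 4)⟦X⟧) = 0 := by
    rw [← map_ofNat C, show (4 : ZMod 4) = 0 from rfl, map_zero]
  have hf1f2 : (∏ i ∈ Icc 1 N, (1 - (X ^ i) ^ 1 : (ZMod 4)⟦X⟧)) ^ 4 =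
      (∏ i ∈ Icc 1 N, (1 - (X ^ i) ^ 2)) ^ 2 := by
    simpa only [pow_one] using
      prod_one_sub_pow_four_of_four_eq_zero h4 (Icc 1 N) fun i : ℕ => (X ^ i : (ZMod 4)⟦X⟧)
  have hf2f4 : (∏ i ∈ Icc 1 N, (1 - (X ^ i) ^ 2 : (ZMod 4)⟦X⟧)) ^ 4 =
      (∏ i ∈ Icc 1 N, (1 - (X ^ i) ^ 4)) ^ 2 := by
    have := prod_one_sub_pow_four_of_four_eq_zero h4 (Icc 1 N)
      fun i : ℕ => (X ^ i : (ZMod 4)⟦X⟧) ^ 2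
    simp only [← pow_mul, mul_assoc, Nat.reduceMul] at this ⊢
    exact this
  have hf1f2f4 : (∏ i ∈ Icc 1 N, (1 - (X ^ i) ^ 1 : (ZMod 4)⟦X⟧)) ^ 2 *
      (∏ i ∈ Icc 1 N, (1 - (X ^ i) ^ 2)) *
        (1 + 2 * ∑ i ∈ Icc 1 N, X ^ i * invOneSubXPow (ZMod 4) (2 * i)) =
      ∏ i ∈ Icc 1 N, (1 - (X ^ i) ^ 4) := by
    simp only [pow_one]
    refine prod_one_sub_sq_mul_prod_one_sub_sq_mul_one_add_two_mul_sum h4 _ (x := (X ^ ·))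
      (g := fun i => invOneSubXPow (ZMod 4) (2 * i)) fun i hi => ?_
    rw [← pow_mul, mul_comm i]
    exact one_sub_X_pow_mul_invOneSubXPow (by have := (mem_Icc.1 hi).1; omega)
  simp only [map_mul, map_pow, map_fTrunc]
  exact pow_mul_pow_mul_eq_pow_odd hf1f2 hf2f4 hf1f2f4 k

theorem intCast_b_two_mul_add_one (k : ℕ) {N : ℕ} (hN : N ≠ 0) :
    ((b (2 * k + 1) N : ℤ) : ZMod 4) = 2 * #{i ∈ Icc 1 N | 2 * i ∣ N - i} := by
  set φ := map (Int.castRingHom (ZMod 4))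
  set D := fTrunc 1 N ^ (2 * (2 * k + 1)) * fTrunc 2 N ^ (2 * k + 1)
  set E : (ZMod 4)⟦X⟧ := ∑ i ∈ Icc 1 N, X ^ i * invOneSubXPow (ZMod 4) (2 * i)
  have hD : constantCoeff D = ((1 : ℤˣ) : ℤ) := by
    simp [D, constantCoeff_fTrunc]
  have hDinv : φ D * φ (invOfUnit D 1) = 1 := by
    rw [← map_mul, mul_invOfUnit _ _ hD, map_one]
  have hgen : φ (fTrunc 4 N ^ (2 * k + 1) * invOfUnit D 1) = 1 + 2 * E := by
    rw [map_mul, map_pow, ← map_fTrunc_pow_mul_one_add_two_mul_sum]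
    linear_combination (1 + 2 * E) * hDinv
  have hcoeffE : coeff N E = #{i ∈ Icc 1 N | 2 * i ∣ N - i} := by
    rw [map_sum, natCast_card_filter]
    exact sum_congr rfl fun i hi => coeff_X_pow_mul_invOneSubXPow (mem_Icc.1 hi).2
  calc ((b (2 * k + 1) N : ℤ) : ZMod 4)
      = coeff N (φ (fTrunc 4 N ^ (2 * k + 1) * invOfUnit D 1)) := by rw [coeff_map]; rfl
    _ = 2 * #{i ∈ Icc 1 N | 2 * i ∣ N - i} := by
      rw [hgen, map_add, coeff_one, if_neg hN, zero_add, two_mul, map_add, hcoeffE, two_mul]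

theorem b_two_mul_add_one_modEq_zero (k : ℕ) {N : ℕ} (hodd : Odd N) (hsq : ¬IsSquare N) :
    b (2 * k + 1) N ≡ 0 [ZMOD 4] := by
  obtain ⟨c, hc⟩ := Nat.even_card_divisors_of_not_isSquare hsq
  rw [Int.modEq_zero_iff_dvd, ← Nat.cast_ofNat, ← ZMod.intCast_zmod_eq_zero_iff_dvd,
    intCast_b_two_mul_add_one k hodd.pos.ne', Nat.filter_two_mul_dvd_sub_self_eq_divisors hodd, hc]
  have h4 : (4 : ZMod 4) = 0 := rfl
  push_cast
  linear_combination (c : ZMod 4) * h4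

theorem stmt19_general (p r R : ℕ) (hp : p.Prime) (hp3 : 3 ≤ p)
    (hnonres : ∀ x : ℤ, ¬ (x ^ 2 ≡ (r : ℤ) [ZMOD p]))
    (hR : R = if Odd r then r else p + r)
    (n k : ℕ) :
    b (2 * k + 1) (2 * p * n + R) ≡ 0 [ZMOD 4] := by
  have hR' : Odd R ∧ (R : ℤ) ≡ r [ZMOD p] := by
    split_ifs at hR with hr <;> subst hR
    · exact ⟨hr, rfl⟩
    · refine ⟨(hp.odd_of_ne_two (by omega)).add_even (Nat.not_odd_iff_even.1 hr), ?_⟩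
      simp [Int.ModEq]
  refine b_two_mul_add_one_modEq_zero k (Even.add_odd ⟨p * n, by ring⟩ hR'.1) ?_
  rintro ⟨a, ha⟩
  refine hnonres a ?_
  calc (a : ℤ) ^ 2 = R + p * (2 * n) := by rw [sq, ← Nat.cast_mul, ← ha]; push_cast; ring
    _ ≡ R [ZMOD p] := by simp [Int.ModEq]
    _ ≡ r [ZMOD p] := hR'.2

theorem stmt19 (p r R : ℕ) (hp : p.Prime) (hp3 : 3 ≤ p)
    (hr1 : 1 ≤ r) (hr2 : r ≤ p - 1)
    (hnonres : ∀ x : ℤ, ¬ (x ^ 2 ≡ (r : ℤ) [ZMOD p]))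
    (hR : R = if Odd r then r else p + r)
    (n k : ℕ) :
    b (2 * k + 1) (2 * p * n + R) ≡ 0 [ZMOD 4] :=
  stmt19_general p r R hp hp3 hnonres hR n k
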